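/- Let $E$ be a Banach space and $C\in(0,1]$. Suppose that for all $x\in S_E$, $x^{**}\in S_{E^{**}}$ and $\varepsilon>0$ there exists $x_0\in E$ with $\|\pm x+Cx^{**}-x_0\|<1+\varepsilon$. Then $E$ is an $M(1,C)$-ideal in $E^{**}$, i.e. the canonical projection $\mathcal{Q}$ on $E^{***}$ onto $E^*$ with kernel $E^\perp$ satisfies $\|\mathcal{Q}f\|+C\|f-\mathcal{Q}f\|\le\|f\|$ for all $f\in E^{***}$. -/

import Mathlib

/-!
Write `g = f ∘ J ∈ E*`, so that `‖𝒬 f‖ = ‖g‖`, and `h = f - 𝒬 f`. For unit vectors `x ∈ E`,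
`x** ∈ E**` and the `x₀` the hypothesis gives, put `A = J x + C x** - J x₀` and
`B = -J x + C x** - J x₀`. In `f(A) - B(g) = 2 g(x) + C h(x**)` the terms in `x₀` cancel, so
`2 g(x) + C h(x**) ≤ (1 + ε)(‖f‖ + ‖g‖)`. Letting `ε → 0` and taking suprema over `x` and `x**`
yields `2‖g‖ + C‖h‖ ≤ ‖f‖ + ‖g‖`.
-/

/-- The topological dual of a seminormed space `E` (as in the older Mathlib, where it was
`NormedSpace.Dual`; it is now called `StrongDual`). -/
abbrev NormedSpace.Dual (𝕜 : Type*) [NontriviallyNormedField 𝕜] (E : Type*)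
    [SeminormedAddCommGroup E] [NormedSpace 𝕜 E] : Type _ :=
  E →L[𝕜] 𝕜

open NormedSpace

/-- The canonical projection on `E***` with range (the canonical image of) `E*`
and kernel the annihilator of `E`. -/
noncomputable def triQ (E : Type*) [NormedAddCommGroup E] [NormedSpace ℝ E]
    (f : Dual ℝ (Dual ℝ (Dual ℝ E))) : Dual ℝ (Dual ℝ (Dual ℝ E)) :=
  inclusionInDoubleDual ℝ (Dual ℝ E) (f.comp (inclusionInDoubleDual ℝ E))

lemma norm_le_of_forall_norm_eq_one_apply_le {F : Type*}
    [NormedAddCommGroup F] [NormedSpace ℝ F] [Nontrivial F] (φ : Dual ℝ F) {M : ℝ}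
    (hφ : ∀ y : F, ‖y‖ = 1 → φ y ≤ M) : ‖φ‖ ≤ M := by
  have hsymm : ∀ y : F, ‖y‖ = 1 → |φ y| ≤ M := fun y hy =>
    abs_le.mpr ⟨by linarith [map_neg φ y, hφ (-y) (by rwa [norm_neg])], hφ y hy⟩
  obtain ⟨y, hy⟩ := exists_norm_eq F zero_le_one
  exact φ.opNorm_le_of_unit_norm ((abs_nonneg _).trans (hsymm y hy)) hsymm

section TriQ

variable {E : Type*} [NormedAddCommGroup E] [NormedSpace ℝ E]

local notation "J" => inclusionInDoubleDual ℝ E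

lemma triQ_apply (f : Dual ℝ (Dual ℝ (Dual ℝ E))) (F : Dual ℝ (Dual ℝ E)) :
    triQ E f F = F (f.comp J) :=
  rfl

lemma norm_triQ (f : Dual ℝ (Dual ℝ (Dual ℝ E))) : ‖triQ E f‖ = ‖f.comp J‖ :=
  (inclusionInDoubleDualLi ℝ).norm_map _

lemma two_mul_comp_apply_add_mul_sub_triQ_apply (f : Dual ℝ (Dual ℝ (Dual ℝ E))) (C : ℝ)
    (x x₀ : E) (F : Dual ℝ (Dual ℝ E)) :
    2 * f.comp J x + C * (f - triQ E f) F =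
      f (J x + C • F - J x₀) - (-J x + C • F - J x₀) (f.comp J) := by
  simp [triQ_apply]
  ring

lemma two_mul_comp_apply_add_mul_sub_triQ_apply_le (f : Dual ℝ (Dual ℝ (Dual ℝ E))) (C : ℝ)
    (x : E) (F : Dual ℝ (Dual ℝ E))
    (hx : ∀ ε : ℝ, 0 < ε → ∃ x₀ : E,
      ‖J x + C • F - J x₀‖ < 1 + ε ∧ ‖-J x + C • F - J x₀‖ < 1 + ε) :
    2 * f.comp J x + C * (f - triQ E f) F ≤ ‖f‖ + ‖f.comp J‖ := by
  refine (le_iff_forall_one_lt_le_mul₀ (by positivity)).mpr fun t ht => ?_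
  obtain ⟨x₀, hA, hB⟩ := hx (t - 1) (by linarith)
  rw [two_mul_comp_apply_add_mul_sub_triQ_apply f C x x₀ F]
  set A := J x + C • F - J x₀
  set B := -J x + C • F - J x₀
  have hfA : f A ≤ ‖f‖ * t := calc
    f A ≤ ‖f‖ * ‖A‖ := (le_abs_self _).trans (f.le_opNorm A)
    _ ≤ ‖f‖ * t := by gcongr; linarith
  have hBg : -(‖f.comp J‖ * t) ≤ B (f.comp J) := calc
    -(‖f.comp J‖ * t) ≤ -(‖B‖ * ‖f.comp J‖) := by
      rw [mul_comm ‖B‖]; gcongr; linarith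
    _ ≤ B (f.comp J) := neg_le_of_abs_le (B.le_opNorm _)
  linarith

end TriQ

theorem stmt8_general {E : Type*} [NormedAddCommGroup E] [NormedSpace ℝ E]
    (C : ℝ) (hC0 : 0 < C)
    (hyp : ∀ x : E, ‖x‖ = 1 → ∀ xss : Dual ℝ (Dual ℝ E), ‖xss‖ = 1 → ∀ ε : ℝ, 0 < ε →
      ∃ x₀ : E,
        ‖inclusionInDoubleDual ℝ E x + C • xss - inclusionInDoubleDual ℝ E x₀‖ < 1 + ε ∧
        ‖-(inclusionInDoubleDual ℝ E x) + C • xss - inclusionInDoubleDual ℝ E x₀‖ < 1 + ε) :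
    ∀ f : Dual ℝ (Dual ℝ (Dual ℝ E)),
      ‖triQ E f‖ + C * ‖f - triQ E f‖ ≤ ‖f‖ := by
  intro f
  rcases subsingleton_or_nontrivial E with hE | hE
  · simp [Subsingleton.elim f 0]
  have : Nontrivial (Dual ℝ (Dual ℝ E)) := (inclusionInDoubleDualLi ℝ).injective.nontrivial
  set g := f.comp (inclusionInDoubleDual ℝ E)
  have key := fun x hx F hF =>
    two_mul_comp_apply_add_mul_sub_triQ_apply_le f C x F (hyp x hx F hF)
  have hsub := norm_le_of_forall_norm_eq_one_apply_le (F := Dual ℝ (Dual ℝ E))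
      (f - triQ E f) (M := (‖f‖ - ‖g‖) / C) fun F hF => by
    have hg := norm_le_of_forall_norm_eq_one_apply_le g
      (M := (‖f‖ + ‖g‖ - C * (f - triQ E f) F) / 2) fun x hx => by linarith [key x hx F hF]
    rw [le_div_iff₀' hC0]
    linarith
  rw [le_div_iff₀' hC0] at hsub
  rw [norm_triQ]
  linarith

theorem stmt8 {E : Type*} [NormedAddCommGroup E] [NormedSpace ℝ E] [CompleteSpace E]
    (C : ℝ) (hC0 : 0 < C) (hC1 : C ≤ 1)
    (hyp : ∀ x : E, ‖x‖ = 1 → ∀ xss : Dual ℝ (Dual ℝ E), ‖xss‖ = 1 → ∀ ε : ℝ, 0 < ε →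
      ∃ x₀ : E,
        ‖inclusionInDoubleDual ℝ E x + C • xss - inclusionInDoubleDual ℝ E x₀‖ < 1 + ε ∧
        ‖-(inclusionInDoubleDual ℝ E x) + C • xss - inclusionInDoubleDual ℝ E x₀‖ < 1 + ε) :
    ∀ f : Dual ℝ (Dual ℝ (Dual ℝ E)),
      ‖triQ E f‖ + C * ‖f - triQ E f‖ ≤ ‖f‖ :=
  stmt8_general C hC0 hyp
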